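/- arXiv:1907.03179 — 2 statements merged into one kernel-verified Lean document; each statement's English description precedes it below -/
import Mathlib

section
/- Let S and T be finite nonempty types. Let q : S → ℝ be a probability distribution on S (q s ≥ 0 for all s and ∑_{s} q s = 1), and for each s ∈ S let k s : T → ℝ be a probability distribution on T (k s t > 0 for all t and ∑_{t} k s t = 1). Define the marginal m : T → ℝ by m t = ∑_{s} q s * k s t. Then the mutual information of the joint distribution (s, t) ↦ q s * k s t, namely I = ∑_{s} ∑_{t} q s * k s t * Real.log (k s t / m t), is bounded above by the mean pairwise Kullback–Leibler divergence between conditionals: I ≤ ∑_{u} ∑_{v} q u * q v * (∑_{t} k u t * Real.log (k u t / k v t)). -/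
theorem mutual_info_le_mean_pairwise_KL
    {S T : Type*} [Fintype S] [Fintype T] [Nonempty S] [Nonempty T]
    (q : S → ℝ) (k : S → T → ℝ)
    (hq : ∀ s, 0 ≤ q s) (hq1 : ∑ s, q s = 1)
    (hk : ∀ s t, 0 < k s t) (hk1 : ∀ s, ∑ t, k s t = 1)
    (m : T → ℝ) (hm : ∀ t, m t = ∑ s, q s * k s t) :
    (∑ s, ∑ t, q s * k s t * Real.log (k s t / m t)) ≤
      ∑ u, ∑ v, q u * q v * (∑ t, k u t * Real.log (k u t / k v t)) := by
  -- key Jensen step: ∑ v, q v * log (k v t) ≤ log (m t)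
  have jen : ∀ t, ∑ v, q v * Real.log (k v t) ≤ Real.log (m t) := by
    intro t
    have := strictConcaveOn_log_Ioi.concaveOn.le_map_sum
      (t := Finset.univ) (w := q) (p := fun v => k v t)
      (fun i _ => hq i) hq1 (fun i _ => hk i t)
    simpa [smul_eq_mul, hm t] using this
  apply Finset.sum_le_sum
  intro s _
  have hinner : ∑ t, k s t * Real.log (k s t / m t) ≤
      ∑ v, q v * (∑ t, k s t * Real.log (k s t / k v t)) := by
    have hmpos : ∀ t, 0 < m t := by
      intro t
      rw [hm t]
      obtain ⟨s0, hs0⟩ : ∃ s0, 0 < q s0 := by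
        by_contra h
        push_neg at h
        have : ∀ s, q s = 0 := fun s => le_antisymm (h s) (hq s)
        simp [this] at hq1
      exact Finset.sum_pos' (fun i _ => mul_nonneg (hq i) (hk i t).le)
        ⟨s0, Finset.mem_univ s0, mul_pos hs0 (hk s0 t)⟩
    have expand : ∀ v, (∑ t, k s t * Real.log (k s t / k v t)) =
        ∑ t, k s t * Real.log (k s t) - ∑ t, k s t * Real.log (k v t) := by
      intro v
      rw [← Finset.sum_sub_distrib]
      congr 1; ext t
      rw [Real.log_div (hk s t).ne' (hk v t).ne']; ring
    have lhs_eq : ∑ t, k s t * Real.log (k s t / m t) =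
        ∑ t, k s t * Real.log (k s t) - ∑ t, k s t * Real.log (m t) := by
      rw [← Finset.sum_sub_distrib]
      congr 1; ext t
      rw [Real.log_div (hk s t).ne' (hmpos t).ne']; ring
    have rhs_eq : ∑ v, q v * (∑ t, k s t * Real.log (k s t / k v t)) =
        ∑ t, k s t * Real.log (k s t) - ∑ t, k s t * (∑ v, q v * Real.log (k v t)) := by
      simp only [expand, mul_sub, Finset.sum_sub_distrib, ← Finset.sum_mul, hq1, one_mul]
      congr 1
      simp only [Finset.mul_sum]
      rw [Finset.sum_comm]
      congr 1; ext t
      congr 1; ext v; ring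
    rw [lhs_eq, rhs_eq]
    apply sub_le_sub_left
    apply Finset.sum_le_sum
    intro t _
    exact mul_le_mul_of_nonneg_left (jen t) (hk s t).le
  calc ∑ t, q s * k s t * Real.log (k s t / m t)
      = q s * ∑ t, k s t * Real.log (k s t / m t) := by
        rw [Finset.mul_sum]; congr 1; ext t; ring
    _ ≤ q s * ∑ v, q v * (∑ t, k s t * Real.log (k s t / k v t)) :=
        mul_le_mul_of_nonneg_left hinner (hq s)
    _ = ∑ v, q s * q v * (∑ t, k s t * Real.log (k s t / k v t)) := by
        rw [Finset.mul_sum]; congr 1; ext v; ring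
end

section
/- Let S and T be finite nonempty types. Let q : S → ℝ be a probability distribution on S (q s ≥ 0 for all s and ∑_{s} q s = 1), and for each s ∈ S let k s : T → ℝ be a probability distribution on T (k s t > 0 for all t and ∑_{t} k s t = 1). Define the marginal m : T → ℝ by m t = ∑_{s} q s * k s t. Then for every function F : S → T → ℝ, the Donsker–Varadhan-type lower bound holds: (∑_{s} ∑_{t} q s * k s t * F s t) − Real.log (∑_{s} ∑_{t} q s * m t * Real.exp (F s t)) ≤ ∑_{s} ∑_{t} q s * k s t * Real.log (k s t / m t). -/
/-!
Write `p s t = q s * k s t` for the joint weights, which sum to one. By Jensen's inequality for the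
concave logarithm, applied to the values `m t * exp (F s t) / k s t` under `p`,
`∑ p * (F - log (k / m)) = ∑ p * log (m * exp F / k) ≤ log ∑ p * (m * exp F / k) = log ∑ q * m * exp F`.
-/

open Finset Real

theorem Real.sum_mul_log_le_log_sum_mul {ι : Type*} (s : Finset ι) (w x : ι → ℝ)
    (hw : ∀ i ∈ s, 0 ≤ w i) (hw1 : ∑ i ∈ s, w i = 1) (hx : ∀ i ∈ s, 0 < x i) :
    ∑ i ∈ s, w i * log (x i) ≤ log (∑ i ∈ s, w i * x i) :=
  strictConcaveOn_log_Ioi.concaveOn.le_map_sum hw hw1 hx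

theorem Finset.sum_mul_pos_of_sum_eq_one {ι : Type*} (s : Finset ι) (w x : ι → ℝ)
    (hw : ∀ i ∈ s, 0 ≤ w i) (hw1 : ∑ i ∈ s, w i = 1) (hx : ∀ i ∈ s, 0 < x i) :
    0 < ∑ i ∈ s, w i * x i := by
  obtain ⟨i, hi, hwi⟩ : ∃ i ∈ s, 0 < w i := by
    by_contra! h
    have : ∑ i ∈ s, w i = 0 := sum_eq_zero fun i hi => le_antisymm (h i hi) (hw i hi)
    linarith
  exact sum_pos' (fun j hj => mul_nonneg (hw j hj) (hx j hj).le) ⟨i, hi, mul_pos hwi (hx i hi)⟩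

theorem donsker_varadhan_lower_bound_general
    {S T : Type*} [Fintype S] [Fintype T]
    (q : S → ℝ) (k : S → T → ℝ)
    (hq : ∀ s, 0 ≤ q s) (hq1 : ∑ s, q s = 1)
    (hk : ∀ s t, 0 < k s t) (hk1 : ∀ s, ∑ t, k s t = 1)
    (m : T → ℝ) (hm : ∀ t, m t = ∑ s, q s * k s t)
    (F : S → T → ℝ) :
    (∑ s, ∑ t, q s * k s t * F s t) -
        Real.log (∑ s, ∑ t, q s * m t * Real.exp (F s t)) ≤
      ∑ s, ∑ t, q s * k s t * Real.log (k s t / m t) := by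
  have hm_pos (t : T) : 0 < m t :=
    hm t ▸ sum_mul_pos_of_sum_eq_one _ q (k · t) (fun s _ => hq s) hq1 fun s _ => hk s t
  have hp_sum : ∑ st : S × T, q st.1 * k st.1 st.2 = 1 := by
    simp only [Fintype.sum_prod_type, ← mul_sum, hk1, mul_one, hq1]
  have jensen := Real.sum_mul_log_le_log_sum_mul univ (fun st : S × T => q st.1 * k st.1 st.2)
    (fun st => m st.2 * exp (F st.1 st.2) / k st.1 st.2)
    (fun st _ => mul_nonneg (hq _) (hk _ _).le) hp_sum
    (fun st _ => by have := hm_pos st.2; have := hk st.1 st.2; positivity)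
  have log_term (s : S) (t : T) : q s * k s t * log (m t * exp (F s t) / k s t) =
      q s * k s t * F s t - q s * k s t * log (k s t / m t) := by
    rw [log_div (by have := hm_pos t; positivity) (hk s t).ne', log_mul (hm_pos t).ne' (exp_ne_zero _),
      log_exp, log_div (hk s t).ne' (hm_pos t).ne']
    ring
  have mean_term (s : S) (t : T) :
      q s * k s t * (m t * exp (F s t) / k s t) = q s * m t * exp (F s t) := by
    field_simp [(hk s t).ne']
  simp only [Fintype.sum_prod_type, log_term, mean_term, sum_sub_distrib] at jensen
  linarith

theorem donsker_varadhan_lower_bound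
    {S T : Type*} [Fintype S] [Fintype T] [Nonempty S] [Nonempty T]
    (q : S → ℝ) (k : S → T → ℝ)
    (hq : ∀ s, 0 ≤ q s) (hq1 : ∑ s, q s = 1)
    (hk : ∀ s t, 0 < k s t) (hk1 : ∀ s, ∑ t, k s t = 1)
    (m : T → ℝ) (hm : ∀ t, m t = ∑ s, q s * k s t)
    (F : S → T → ℝ) :
    (∑ s, ∑ t, q s * k s t * F s t) -
        Real.log (∑ s, ∑ t, q s * m t * Real.exp (F s t)) ≤
      ∑ s, ∑ t, q s * k s t * Real.log (k s t / m t) :=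
  donsker_varadhan_lower_bound_general q k hq hq1 hk hk1 m hm F
end
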